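/- On the reference tetrahedron K³, for each face f_{j1} = [j2,j3,j4], each edge [k1,k2] of that face (k1 < k2, with k3 the remaining vertex of the face), and each integer i ≥ 0, the first-kind edge-based face function Φ^{f_{j1},i}_{e[k1,k2]} = C_i λ_{k3} (1−λ_{k1})^i P_i^{(3,0)}(2λ_{k2}/(1−λ_{k1}) − 1) (∇λ_{k1} × ∇λ_{k2})/|∇λ_{k1} × ∇λ_{k2}| has vanishing normal component on every face other than f_{j1}: for every jk ≠ j1, n^{f_{jk}} · Φ^{f_{j1},i}_{e[k1,k2]} = 0 at every point of the face f_{jk}. -/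

import Mathlib

open MeasureTheory
open scoped BigOperators

noncomputable section

/-- Vertices of the reference tetrahedron:
`v0 = (0,0,0)`, `v1 = (1,0,0)`, `v2 = (0,1,0)`, `v3 = (0,0,1)`. -/
def vtx : Fin 4 → Fin 3 → ℝ := ![![0,0,0], ![1,0,0], ![0,1,0], ![0,0,1]]

/-- Barycentric coordinates `λ0 = 1−ξ−η−ζ`, `λ1 = ξ`, `λ2 = η`, `λ3 = ζ`. -/
def lam : Fin 4 → (Fin 3 → ℝ) → ℝ :=
  ![fun p => 1 - p 0 - p 1 - p 2, fun p => p 0, fun p => p 1, fun p => p 2]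

/-- The (constant) gradients `∇λ_i`. -/
def gradLam : Fin 4 → Fin 3 → ℝ := ![![-1,-1,-1], ![1,0,0], ![0,1,0], ![0,0,1]]

/-- The reference tetrahedron `K³ = {(ξ,η,ζ) : ξ,η,ζ ≥ 0, ξ+η+ζ ≤ 1}`. -/
def K3 : Set (Fin 3 → ℝ) := {p | 0 ≤ p 0 ∧ 0 ≤ p 1 ∧ 0 ≤ p 2 ∧ p 0 + p 1 + p 2 ≤ 1}

/-- Cross product in ℝ³. -/
def cross3 (u v : Fin 3 → ℝ) : Fin 3 → ℝ :=
  ![u 1 * v 2 - u 2 * v 1, u 2 * v 0 - u 0 * v 2, u 0 * v 1 - u 1 * v 0]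

/-- Euclidean norm in ℝ³. -/
def norm3 (u : Fin 3 → ℝ) : ℝ := Real.sqrt (∑ i, u i ^ 2)

/-- Euclidean dot product in ℝ³. -/
def dot3 (u v : Fin 3 → ℝ) : ℝ := ∑ i, u i * v i

/-- The unit vector in the direction of `u`. -/
def unitV (u : Fin 3 → ℝ) : Fin 3 → ℝ := (norm3 u)⁻¹ • u

/-- The outward unit normal of the face `f_j` of `K³` opposite the vertex
`v_j` (that face lies in the plane `λ_j = 0`): `n^{f_j} = −∇λ_j / |∇λ_j|`. -/
def nFace (j : Fin 4) : Fin 3 → ℝ := (norm3 (gradLam j))⁻¹ • (-(gradLam j))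

/-- The classical (un-normalized) Jacobi polynomial `P_n^{(a,b)}` in homogenized
(cleared-denominator) form: `jacobiHom n a b u w = w^n P_n^{(a,b)}(u/w)` for
`w ≠ 0`, via the explicit sum
`P_n^{(a,b)}(x) = ∑_{s} C(n+a, n−s) C(n+b, s) ((x−1)/2)^s ((x+1)/2)^{n−s}`. -/
def jacobiHom (n a b : ℕ) (u w : ℝ) : ℝ :=
  ∑ k ∈ Finset.range (n+1),
    (((n+a).choose (n-k) : ℝ)) * (((n+b).choose k : ℝ)) *
      ((u - w)/2)^k * ((u + w)/2)^(n-k)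

/-- The degree-`n` Legendre polynomial `ℓ_n` (normalized so `ℓ_n(1) = 1`). -/
def legendre (n : ℕ) (x : ℝ) : ℝ := jacobiHom n 0 0 x 1

/-- Normalization constant `C_i = √(3(2i+4)(2i+5))`. -/
def CFK (i : ℕ) : ℝ := Real.sqrt ((3*(2*i+4)*(2*i+5) : ℕ) : ℝ)

/-- First-kind edge-based face function
`Φ^{f_{j1},i}_{e[k1,k2]} = C_i λ_{k3} (1−λ_{k1})^i P_i^{(3,0)}(2λ_{k2}/(1−λ_{k1}) − 1)
(∇λ_{k1} × ∇λ_{k2})/|∇λ_{k1} × ∇λ_{k2}|`. -/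
def PhiFK (k1 k2 k3 : Fin 4) (i : ℕ) (p : Fin 3 → ℝ) : Fin 3 → ℝ :=
  (CFK i * lam k3 p *
    jacobiHom i 3 0 (2 * lam k2 p - (1 - lam k1 p)) (1 - lam k1 p)) •
  unitV (cross3 (gradLam k1) (gradLam k2))

/-
The field is a scalar multiple of the constant vector `∇λ_{k1} × ∇λ_{k2}`. The normal of a face
`f_{jk}` with `jk ≠ j1` is parallel to `∇λ_{jk}`, and `jk` is one of `k1, k2, k3`: for `k1`, `k2`
the cross product is orthogonal to `∇λ_{jk}`, and for `k3` the scalar factor `λ_{k3}` vanishes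
on the face.
-/

lemma dot3_smul_left (c : ℝ) (u v : Fin 3 → ℝ) : dot3 (c • u) v = c * dot3 u v := by
  simp only [dot3, Fin.sum_univ_three, Pi.smul_apply, smul_eq_mul]
  ring

lemma dot3_smul_right (c : ℝ) (u v : Fin 3 → ℝ) : dot3 u (c • v) = c * dot3 u v := by
  simp only [dot3, Fin.sum_univ_three, Pi.smul_apply, smul_eq_mul]
  ring

lemma dot3_neg_left (u v : Fin 3 → ℝ) : dot3 (-u) v = -dot3 u v := by
  simp only [dot3, Fin.sum_univ_three, Pi.neg_apply]
  ring

lemma dot3_cross3_self_left (u v : Fin 3 → ℝ) : dot3 u (cross3 u v) = 0 := by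
  simp only [dot3, cross3, Fin.sum_univ_three, Matrix.cons_val]
  ring

lemma dot3_cross3_self_right (u v : Fin 3 → ℝ) : dot3 v (cross3 u v) = 0 := by
  simp only [dot3, cross3, Fin.sum_univ_three, Matrix.cons_val]
  ring

lemma dot3_nFace (j : Fin 4) (v : Fin 3 → ℝ) :
    dot3 (nFace j) v = -((norm3 (gradLam j))⁻¹ * dot3 (gradLam j) v) := by
  rw [nFace, dot3_smul_left, dot3_neg_left, mul_neg]

lemma dot3_PhiFK_eq_zero_of_dot3_cross3_eq_zero {u : Fin 3 → ℝ} {k1 k2 : Fin 4}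
    (h : dot3 u (cross3 (gradLam k1) (gradLam k2)) = 0) (k3 : Fin 4) (i : ℕ)
    (p : Fin 3 → ℝ) : dot3 u (PhiFK k1 k2 k3 i p) = 0 := by
  rw [PhiFK, unitV, dot3_smul_right, dot3_smul_right, h, mul_zero, mul_zero]

lemma PhiFK_eq_zero_of_lam_eq_zero {k3 : Fin 4} {p : Fin 3 → ℝ} (h : lam k3 p = 0)
    (k1 k2 : Fin 4) (i : ℕ) : PhiFK k1 k2 k3 i p = 0 := by
  rw [PhiFK, h, mul_zero, zero_mul, zero_smul]

lemma Fin.eq_or_eq_or_eq_of_ne {j k1 k2 k3 l : Fin 4} (h1 : k1 ≠ j) (h2 : k2 ≠ j) (h3 : k3 ≠ j)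
    (h12 : k1 ≠ k2) (h31 : k3 ≠ k1) (h32 : k3 ≠ k2) (hl : l ≠ j) :
    l = k1 ∨ l = k2 ∨ l = k3 := by
  simp only [ne_eq, Fin.ext_iff] at *
  omega

/-- each first-kind edge-based face function attached to the face
`f_{j1}` has vanishing normal component at every point of every face
`f_{jk}` with `jk ≠ j1` (the face `f_{jk}` being the set of points of `K³`
with `λ_{jk} = 0`). -/
theorem stmt10 : ∀ (j1 k1 k2 k3 : Fin 4), k1 ≠ j1 → k2 ≠ j1 → k3 ≠ j1 →
    k1 < k2 → k3 ≠ k1 → k3 ≠ k2 → ∀ i : ℕ, ∀ jk : Fin 4, jk ≠ j1 →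
    ∀ p ∈ K3, lam jk p = 0 → dot3 (nFace jk) (PhiFK k1 k2 k3 i p) = 0 := by
  intro j1 k1 k2 k3 hk1 hk2 hk3 hlt h31 h32 i jk hjk p _ hp
  rw [dot3_nFace, neg_eq_zero, mul_eq_zero]
  right
  rcases Fin.eq_or_eq_or_eq_of_ne hk1 hk2 hk3 hlt.ne h31 h32 hjk with rfl | rfl | rfl
  · exact dot3_PhiFK_eq_zero_of_dot3_cross3_eq_zero (dot3_cross3_self_left _ _) k3 i p
  · exact dot3_PhiFK_eq_zero_of_dot3_cross3_eq_zero (dot3_cross3_self_right _ _) k3 i p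
  · simp only [PhiFK_eq_zero_of_lam_eq_zero hp, dot3, Pi.zero_apply, mul_zero, Finset.sum_const_zero]
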